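/- arXiv:2001.08246 — 13 statements merged into one kernel-verified Lean document; each statement's English description precedes it below -/
import Mathlib

section
/- For coprime odd positive integers x > y and odd positive integer m, gcd((x^m + y^m)/(x + y), (x^m - y^m)/(x - y)) = 1. -/
/-- For coprime odd positive integers `x > y` and odd positive `m`,
`gcd((x^m + y^m)/(x + y), (x^m - y^m)/(x - y)) = 1`. -/
theorem stmt_0 (x y m : ℕ) (hy : 1 ≤ y) (hxy : y < x)
    (hcop : Nat.Coprime x y) (hxodd : Odd x) (hyodd : Odd y)
    (hm : 0 < m) (hmodd : Odd m) :
    Nat.gcd ((x ^ m + y ^ m) / (x + y)) ((x ^ m - y ^ m) / (x - y)) = 1 := by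
  have hym : y ^ m ≤ x ^ m := Nat.pow_le_pow_left hxy.le m
  have hadd : x + y ∣ x ^ m + y ^ m := hmodd.nat_add_dvd_pow_add_pow x y
  have hsub : x - y ∣ x ^ m - y ^ m := Nat.sub_dvd_pow_sub_pow x y m
  set A := (x ^ m + y ^ m) / (x + y) with hA
  set B := (x ^ m - y ^ m) / (x - y) with hB
  have hxypos : 0 < x - y := Nat.sub_pos_of_lt hxy
  -- B equals the geometric sum
  have hgeom : (x - y) * (∑ i ∈ Finset.range m, x ^ i * y ^ (m - 1 - i)) = x ^ m - y ^ m := by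
    have := geom_sum₂_mul (x : ℤ) (y : ℤ) m
    have hcast : ((x : ℤ) - y) * (∑ i ∈ Finset.range m, (x : ℤ) ^ i * (y : ℤ) ^ (m - 1 - i))
        = (x : ℤ) ^ m - (y : ℤ) ^ m := by rw [mul_comm]; exact this
    zify [hym, hxy.le]
    push_cast
    linarith [hcast]
  have hBeq : B = ∑ i ∈ Finset.range m, x ^ i * y ^ (m - 1 - i) := by
    rw [hB, ← hgeom, Nat.mul_div_cancel_left _ hxypos]
  have hBodd : Odd B := by
    rw [Nat.odd_iff, hBeq, Finset.sum_nat_mod]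
    have : ∀ i ∈ Finset.range m, x ^ i * y ^ (m - 1 - i) % 2 = 1 := by
      intro i _
      have : Odd (x ^ i * y ^ (m - 1 - i)) := (hxodd.pow).mul (hyodd.pow)
      exact Nat.odd_iff.mp this
    rw [Finset.sum_congr rfl this, Finset.sum_const, Finset.card_range, smul_eq_mul, mul_one]
    have := Nat.odd_iff.mp hmodd
    omega
  set d := Nat.gcd A B with hd
  have hdA : d ∣ A := Nat.gcd_dvd_left _ _
  have hdB : d ∣ B := Nat.gcd_dvd_right _ _
  have hdodd : Odd d := hBodd.of_dvd_nat hdB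
  have hdsum : d ∣ x ^ m + y ^ m := hdA.trans (Nat.div_dvd_of_dvd hadd)
  have hddiff : d ∣ x ^ m - y ^ m := hdB.trans (Nat.div_dvd_of_dvd hsub)
  have hd2x : d ∣ 2 * x ^ m := by
    have : (x ^ m + y ^ m) + (x ^ m - y ^ m) = 2 * x ^ m := by omega
    exact this ▸ Nat.dvd_add hdsum hddiff
  have hd2y : d ∣ 2 * y ^ m := by
    have : (x ^ m + y ^ m) - (x ^ m - y ^ m) = 2 * y ^ m := by omega
    exact this ▸ Nat.dvd_sub hdsum hddiff
  have hcop2 : Nat.Coprime d 2 := hdodd.coprime_two_right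
  have hdx : d ∣ x ^ m := (Nat.Coprime.dvd_of_dvd_mul_left hcop2 hd2x)
  have hdy : d ∣ y ^ m := (Nat.Coprime.dvd_of_dvd_mul_left hcop2 hd2y)
  have : d ∣ Nat.gcd (x ^ m) (y ^ m) := Nat.dvd_gcd hdx hdy
  rwa [Nat.Coprime.pow m m hcop, Nat.dvd_one] at this
end

section
/- If p is an odd prime dividing x - y with p not dividing x*y, and m is an odd positive integer, then (x^m + y^m)/(x + y) ≡ y^(m-1) (mod p); in particular p does not divide (x^m + y^m)/(x + y). -/
/-- If `p` is an odd prime dividing `x - y` with `p ∤ x*y`, and `m` is odd positive,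
then `(x^m + y^m)/(x + y) ≡ y^(m-1) (mod p)`; in particular `p` does not divide it. -/
theorem stmt_2 (x y m p : ℕ) (hy : 1 ≤ y) (hxy : y < x) (hcop : Nat.Coprime x y)
    (hp : p.Prime) (hpodd : Odd p) (hpdvd : p ∣ x - y) (hpxy : ¬ p ∣ x * y)
    (hm : 0 < m) (hmodd : Odd m) :
    (x ^ m + y ^ m) / (x + y) ≡ y ^ (m - 1) [MOD p] ∧
      ¬ p ∣ (x ^ m + y ^ m) / (x + y) := by
  haveI : Fact p.Prime := ⟨hp⟩
  have hdvd : x + y ∣ x ^ m + y ^ m := Odd.nat_add_dvd_pow_add_pow x y hmodd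
  set q := (x ^ m + y ^ m) / (x + y) with hqdef
  have hq : (x + y) * q = x ^ m + y ^ m := Nat.mul_div_cancel' hdvd
  have hpy : ¬ p ∣ y := fun h => hpxy (h.mul_left x)
  have hy0 : (y : ZMod p) ≠ 0 := by
    simpa [ZMod.natCast_eq_zero_iff] using hpy
  have h2 : (2 : ZMod p) ≠ 0 := by
    have hp2 : p ≠ 2 := by rintro rfl; exact (Nat.not_odd_iff_even.mpr (by norm_num)) hpodd
    simpa [Nat.cast_ofNat] using (ZMod.natCast_eq_zero_iff 2 p).not.mpr
      (fun h => hp2 ((Nat.prime_dvd_prime_iff_eq hp Nat.prime_two).mp h))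
  have hxey : (x : ZMod p) = (y : ZMod p) := by
    have : y ≡ x [MOD p] := (Nat.modEq_iff_dvd' hxy.le).mpr hpdvd
    exact ((ZMod.natCast_eq_natCast_iff _ _ _).mpr this).symm
  have hqcast : ((x : ZMod p) + y) * q = (x : ZMod p) ^ m + (y : ZMod p) ^ m := by
    exact_mod_cast congrArg (Nat.cast : ℕ → ZMod p) hq
  rw [hxey] at hqcast
  have hym : (y : ZMod p) ^ m = (y : ZMod p) ^ (m - 1) * y := by
    rw [← pow_succ, Nat.sub_add_cancel hm]
  have key : (q : ZMod p) = (y : ZMod p) ^ (m - 1) := by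
    have h2y : (2 : ZMod p) * y ≠ 0 := mul_ne_zero h2 hy0
    apply mul_left_cancel₀ h2y
    calc (2 : ZMod p) * y * q = ((y : ZMod p) + y) * q := by ring
      _ = (y : ZMod p) ^ m + (y : ZMod p) ^ m := hqcast
      _ = 2 * y * (y : ZMod p) ^ (m - 1) := by rw [hym]; ring
  constructor
  · exact (ZMod.natCast_eq_natCast_iff _ _ _).mp (by push_cast; exact key)
  · intro hdq
    have : (q : ZMod p) = 0 := (ZMod.natCast_eq_zero_iff _ _).mpr hdq
    rw [key] at this
    exact hy0 (pow_eq_zero_iff'.mp this).1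
end

section
/- If p is an odd prime dividing x + y with p not dividing x*y, and m is an odd positive integer, then (x^m + y^m)/(x + y) ≡ m * y^(m-1) (mod p). -/
/-- If `p` is an odd prime dividing `x + y` with `p ∤ x*y`, and `m` is odd positive,
then `(x^m + y^m)/(x + y) ≡ m * y^(m-1) (mod p)`. -/
theorem stmt_3 (x y m p : ℕ) (hy : 1 ≤ y) (hxy : y < x) (hcop : Nat.Coprime x y)
    (hp : p.Prime) (hpodd : Odd p) (hpdvd : p ∣ x + y) (hpxy : ¬ p ∣ x * y)
    (hm : 0 < m) (hmodd : Odd m) :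
    (x ^ m + y ^ m) / (x + y) ≡ m * y ^ (m - 1) [MOD p] := by
  -- factorization over ℤ
  set S : ℤ := ∑ i ∈ Finset.range m, (x : ℤ) ^ i * (-(y : ℤ)) ^ (m - 1 - i) with hS
  have hfac : S * ((x : ℤ) + y) = (x : ℤ) ^ m + (y : ℤ) ^ m := by
    have := geom_sum₂_mul (x : ℤ) (-(y : ℤ)) m
    rw [hmodd.neg_pow] at this
    simpa [sub_neg_eq_add] using this
  have hne : ((x : ℤ) + y) ≠ 0 := by positivity
  have hdvdZ : ((x : ℤ) + y) ∣ (x : ℤ) ^ m + (y : ℤ) ^ m := ⟨S, by linarith [hfac]⟩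
  have hdvd : (x + y) ∣ x ^ m + y ^ m := by
    have : ((x + y : ℕ) : ℤ) ∣ ((x ^ m + y ^ m : ℕ) : ℤ) := by push_cast; exact hdvdZ
    exact_mod_cast this
  have hq : (x ^ m + y ^ m) / (x + y) * (x + y) = x ^ m + y ^ m :=
    Nat.div_mul_cancel hdvd
  have hqZ : ((x ^ m + y ^ m) / (x + y) : ℕ) = S := by
    have h1 : (((x ^ m + y ^ m) / (x + y) : ℕ) : ℤ) * ((x : ℤ) + y) = (x : ℤ) ^ m + (y : ℤ) ^ m := by
      exact_mod_cast congrArg (Nat.cast : ℕ → ℤ) hq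
    exact mul_right_cancel₀ hne (h1.trans hfac.symm)
  rw [← ZMod.natCast_eq_natCast_iff]
  have hx : (x : ZMod p) = -(y : ZMod p) := by
    have : ((x + y : ℕ) : ZMod p) = 0 := (ZMod.natCast_eq_zero_iff _ _).mpr hpdvd
    push_cast at this
    linear_combination this
  have hcast : (((x ^ m + y ^ m) / (x + y) : ℕ) : ZMod p) = ((S : ℤ) : ZMod p) := by
    exact_mod_cast congrArg (Int.cast : ℤ → ZMod p) hqZ
  rw [hcast, hS]
  push_cast
  have hev : Even (m - 1) := Nat.Odd.sub_odd hmodd odd_one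
  have hterm : ∀ i ∈ Finset.range m,
      (x : ZMod p) ^ i * (-(y : ZMod p)) ^ (m - 1 - i) = (y : ZMod p) ^ (m - 1) := by
    intro i hi
    rw [hx, ← pow_add, show i + (m - 1 - i) = m - 1 by
      have := Finset.mem_range.mp hi; omega, hev.neg_pow]
  rw [Finset.sum_congr rfl hterm, Finset.sum_const, Finset.card_range, nsmul_eq_mul]
end

section
/- If p is an odd prime dividing x + y with p not dividing x*y, and n is a positive even integer, then (x^n - y^n)/(x + y) ≡ (x - y) * (n/2) * y^(n-2) (mod p). -/
/-- If `p` is an odd prime dividing `x + y` with `p ∤ x*y`, and `n` is a positive even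
integer, then `(x^n - y^n)/(x + y) ≡ (x - y) * (n/2) * y^(n-2) (mod p)`. -/
theorem stmt_4 (x y n p : ℕ) (hy : 1 ≤ y) (hxy : y < x) (hcop : Nat.Coprime x y)
    (hp : p.Prime) (hpodd : Odd p) (hpdvd : p ∣ x + y) (hpxy : ¬ p ∣ x * y)
    (hn : 0 < n) (hneven : Even n) :
    (x ^ n - y ^ n) / (x + y) ≡ (x - y) * (n / 2) * y ^ (n - 2) [MOD p] := by
  obtain ⟨m, hm⟩ := hneven
  subst hm
  have hm1 : 1 ≤ m := by omega
  have hyx : y ≤ x := hxy.le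
  set S := ∑ i ∈ Finset.range m, (x ^ 2) ^ i * (y ^ 2) ^ (m - 1 - i) with hS
  have hpow : y ^ (m + m) ≤ x ^ (m + m) := Nat.pow_le_pow_left hyx _
  have hkey : x ^ (m + m) - y ^ (m + m) = (x + y) * ((x - y) * S) := by
    zify [hpow, hyx, hS]
    push_cast
    linear_combination -geom_sum₂_mul ((x : ℤ) ^ 2) ((y : ℤ) ^ 2) m
  have h1 : (x ^ (m + m) - y ^ (m + m)) / (x + y) = (x - y) * S := by
    rw [hkey, Nat.mul_div_cancel_left _ (by omega)]
  rw [h1]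
  have h2 : (m + m) / 2 = m := by omega
  rw [h2]
  apply (ZMod.natCast_eq_natCast_iff _ _ _).mp
  have hx : (x : ZMod p) = -y := by
    have h0 : ((x + y : ℕ) : ZMod p) = 0 := by
      exact_mod_cast (ZMod.natCast_eq_zero_iff _ _).mpr hpdvd
    push_cast at h0
    exact eq_neg_of_add_eq_zero_left h0
  push_cast [Nat.cast_sub hyx, hS]
  rw [hx]
  have hsum : ∑ i ∈ Finset.range m, (((-(y : ZMod p)) ^ 2) ^ i * ((y : ZMod p) ^ 2) ^ (m - 1 - i))
      = (m : ZMod p) * (y : ZMod p) ^ (m + m - 2) := by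
    rw [Finset.sum_congr rfl (fun i hi => ?_), Finset.sum_const, Finset.card_range,
      nsmul_eq_mul]
    have hi' := Finset.mem_range.mp hi
    rw [neg_sq, ← pow_mul, ← pow_mul, ← pow_add]
    congr 1
    omega
  rw [hsum]
  ring
end

section
/- If p is an odd prime dividing x + y, x and y are coprime, m is even and (x^m - y^m)/(x + y) = p^κ for some κ ≥ 0, then p^κ ≡ (x - y) * (m/2) * y^(m-2) (mod p); consequently if κ ≥ 1 then p divides m. -/
/-- If `p` is an odd prime dividing `x + y`, `x, y` coprime, `m` positive even and
`(x^m - y^m)/(x + y) = p^κ`, then `p^κ ≡ (x - y) * (m/2) * y^(m-2) (mod p)`;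
consequently if `κ ≥ 1` then `p ∣ m`. -/
theorem stmt_5 (x y m p κ : ℕ) (hy : 1 ≤ y) (hxy : y < x) (hcop : Nat.Coprime x y)
    (hp : p.Prime) (hpodd : Odd p) (hpdvd : p ∣ x + y)
    (hm : 0 < m) (hmeven : Even m)
    (hκ : (x ^ m - y ^ m) / (x + y) = p ^ κ) :
    p ^ κ ≡ (x - y) * (m / 2) * y ^ (m - 2) [MOD p] ∧ (1 ≤ κ → p ∣ m) := by
  haveI : Fact p.Prime := ⟨hp⟩
  have hm2 : 2 ≤ m := by
    rcases hmeven with ⟨k, hk⟩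
    omega
  have hyx : y ^ m ≤ x ^ m := Nat.pow_le_pow_left hxy.le m
  -- the cofactor identity over ℤ
  set S : ℤ := ∑ i ∈ Finset.range m, (x : ℤ) ^ i * (-(y : ℤ)) ^ (m - 1 - i) with hS
  have key : S * ((x : ℤ) + (y : ℤ)) = (x : ℤ) ^ m - (y : ℤ) ^ m := by
    have h := geom_sum₂_mul (x : ℤ) (-(y : ℤ)) m
    rw [sub_neg_eq_add, hmeven.neg_pow] at h
    exact h
  have hcastsub : ((x ^ m - y ^ m : ℕ) : ℤ) = (x : ℤ) ^ m - (y : ℤ) ^ m := by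
    push_cast [hyx]; ring
  have hdvdN : (x + y) ∣ (x ^ m - y ^ m) := by
    have : ((x + y : ℕ) : ℤ) ∣ ((x ^ m - y ^ m : ℕ) : ℤ) := by
      rw [hcastsub]
      exact Dvd.intro_left S key
    exact_mod_cast this
  have hmul : (x + y) * p ^ κ = x ^ m - y ^ m := by
    rw [← hκ, Nat.mul_div_cancel' hdvdN]
  have hne : ((x : ℤ) + (y : ℤ)) ≠ 0 := by positivity
  have hpk : (p : ℤ) ^ κ = S := by
    apply mul_left_cancel₀ hne
    rw [mul_comm ((x:ℤ)+(y:ℤ)) S, key, ← hcastsub, ← hmul]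
    push_cast
    ring
  -- pass to ZMod p
  have hxy0 : (x : ZMod p) = -(y : ZMod p) := by
    have : ((x + y : ℕ) : ZMod p) = 0 := (ZMod.natCast_eq_zero_iff _ _).mpr hpdvd
    push_cast at this
    exact eq_neg_of_add_eq_zero_left this
  have hSval : ((S : ℤ) : ZMod p) = (m : ZMod p) * (-(y : ZMod p)) ^ (m - 1) := by
    rw [hS]
    push_cast
    rw [Finset.sum_congr rfl (fun i hi => ?_), Finset.sum_const, Finset.card_range,
      nsmul_eq_mul]
    rw [hxy0, ← pow_add]
    congr 1
    have : i < m := Finset.mem_range.mp hi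
    omega
  have hpy : ¬ p ∣ y := by
    intro h
    have hpx : p ∣ x := by
      have := Nat.dvd_sub hpdvd h
      simpa using this
    have hp1 : p ∣ 1 := hcop ▸ Nat.dvd_gcd hpx h
    exact hp.one_lt.ne' (Nat.eq_one_of_dvd_one hp1)
  have hy0 : (y : ZMod p) ≠ 0 := fun h => hpy ((ZMod.natCast_eq_zero_iff _ _).mp h)
  -- value of p^κ in ZMod p
  have hmain : ((p : ZMod p)) ^ κ = (m : ZMod p) * (-(y : ZMod p)) ^ (m - 1) := by
    have := congrArg (fun z : ℤ => (z : ZMod p)) hpk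
    simpa [hSval] using this
  have hmodd : Odd (m - 1) := by
    rcases hmeven with ⟨k, hk⟩
    exact ⟨k - 1, by omega⟩
  constructor
  · rw [← ZMod.natCast_eq_natCast_iff]
    push_cast [hxy.le]
    rw [hmain, hxy0, hmodd.neg_pow]
    have h2 : (2 : ZMod p) * ((m / 2 : ℕ) : ZMod p) = (m : ZMod p) := by
      have : 2 * (m / 2) = m := Nat.two_mul_div_two_of_even hmeven
      exact_mod_cast congrArg (fun n : ℕ => (n : ZMod p)) this
    have h3 : (y : ZMod p) ^ (m - 2) * (y : ZMod p) = (y : ZMod p) ^ (m - 1) := by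
      rw [← pow_succ]
      congr 1
      omega
    calc (m : ZMod p) * -(y : ZMod p) ^ (m - 1)
        = (-(y:ZMod p) - (y:ZMod p)) * ((m / 2 : ℕ) : ZMod p) * (y : ZMod p) ^ (m-2) := by
          rw [← h3, ← h2]; ring
      _ = _ := by rw [← hxy0]
  · intro hκ1
    have hp0 : ((p : ZMod p)) ^ κ = 0 := by
      rw [ZMod.natCast_self, zero_pow (by omega)]
    rw [hp0] at hmain
    have hm0 : (m : ZMod p) = 0 := by
      rcases mul_eq_zero.mp hmain.symm with h | h
      · exact h
      · exact absurd (pow_eq_zero_iff (by omega)|>.mp h) (by simpa using hy0)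
    exact (ZMod.natCast_eq_zero_iff _ _).mp hm0
end

section
/- Suppose A and B are positive odd integers with A > 1, α and β are nonnegative integers, m > n ≥ 1 are integers, and φ(2^(β + α(m-1)) * A) = 2^(β + α(n-1)) * B. If α + β ≥ 1, then α = 0 and φ(A) = 2B. -/
/-- If `A, B` are odd positive integers with `A > 1`, `m > n ≥ 1` and
`φ(2^(β + α(m-1)) * A) = 2^(β + α(n-1)) * B` with `α + β ≥ 1`, then `α = 0` and
`φ(A) = 2B`. -/
theorem stmt_6 (A B α β m n : ℕ) (hA1 : 1 < A) (hAodd : Odd A) (hB : 0 < B)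
    (hBodd : Odd B) (hn : 1 ≤ n) (hmn : n < m)
    (heq : Nat.totient (2 ^ (β + α * (m - 1)) * A) = 2 ^ (β + α * (n - 1)) * B)
    (hαβ : 1 ≤ α + β) :
    α = 0 ∧ Nat.totient A = 2 * B := by
  set e := β + α * (m - 1) with he
  set f := β + α * (n - 1) with hf
  have hm1 : 1 ≤ m - 1 := by omega
  have hA2 : 2 < A := by
    rcases hAodd with ⟨k, hk⟩; omega
  have he1 : 1 ≤ e := by
    rcases Nat.eq_zero_or_pos α with h | h
    · omega
    · have : 1 ≤ α * (m - 1) := Nat.one_le_iff_ne_zero.mpr (by positivity)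
      omega
  have hef : f ≤ e := by
    have : α * (n - 1) ≤ α * (m - 1) := Nat.mul_le_mul_left _ (by omega)
    omega
  have hcop : Nat.Coprime (2 ^ e) A := by
    exact (Nat.coprime_two_left.mpr hAodd).pow_left _
  have htot2 : Nat.totient (2 ^ e) = 2 ^ (e - 1) := by
    rw [Nat.totient_prime_pow Nat.prime_two (by omega)]
    simp
  have heq' : 2 ^ (e - 1) * Nat.totient A = 2 ^ f * B := by
    rw [← htot2, ← Nat.totient_mul hcop, heq]
  have hφpos : 0 < Nat.totient A := Nat.totient_pos.mpr (by omega)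
  have hφeven : 2 ∣ Nat.totient A := (Nat.totient_even (by omega)).two_dvd
  -- 2-adic valuations
  have hpowfac : ∀ k : ℕ, (2 ^ k).factorization 2 = k := by
    intro k; simp [Nat.Prime.factorization_pow Nat.prime_two]
  have hv : (e - 1) + (Nat.totient A).factorization 2 = f := by
    have := congrArg (fun x => x.factorization 2) heq'
    rw [Nat.factorization_mul (by positivity) hφpos.ne',
      Nat.factorization_mul (by positivity) hB.ne'] at this
    simp only [Finsupp.add_apply, hpowfac] at this
    have hB2 : B.factorization 2 = 0 :=
      Nat.factorization_eq_zero_of_not_dvd (Nat.two_dvd_ne_zero.mpr (Nat.odd_iff.mp hBodd))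
    omega
  have hv1 : 1 ≤ (Nat.totient A).factorization 2 :=
    (Nat.Prime.factorization_pos_of_dvd Nat.prime_two hφpos.ne' hφeven)
  have hfe : f = e := by omega
  have hv2 : (Nat.totient A).factorization 2 = 1 := by omega
  have hα : α = 0 := by
    rcases Nat.eq_zero_or_pos α with h | h
    · exact h
    · exfalso
      have : α * (n - 1) < α * (m - 1) := (Nat.mul_lt_mul_left h).mpr (by omega)
      omega
  refine ⟨hα, ?_⟩
  have hpow : 2 ^ e = 2 ^ (e - 1) * 2 := by
    rw [← pow_succ, Nat.sub_add_cancel he1]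
  have : 2 ^ (e - 1) * Nat.totient A = 2 ^ (e - 1) * (2 * B) := by
    rw [heq', hfe, hpow]; ring
  exact Nat.eq_of_mul_eq_mul_left (by positivity) this
end

section
/- There are no integers x > y ≥ 2 and n ≥ 1 and odd prime p such that p = (x^m + y^m)/(x + y) and p - 1 = 2*(x^n + y^n)/(x + y) with m = n + 2 (m odd, n odd). Moreover, the only solution in integers x > y ≥ 1 of the system p = (x^m + y^m)/(x+y), p - 1 = 2*(x^n + y^n)/(x+y) with m > n ≥ 1 both odd and p prime is x = 2, y = 1, m = 3, n = 1, p = 3. -/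
/-!
Since `x + y` divides `x^n + y^n`, the two equations combine to the single identity
`x^m + y^m = 2 (x^n + y^n) + (x + y)`. As `m ≥ n + 2`, the left side is at least `x² xⁿ`, while the
right side is at most `6 xⁿ`; hence `x = 2`, `y = 1`, and the identity becomes
`2^m = 2^(n+1) + 4`, which forces `n = 1`, `m = 3`, and then `p = 9 / 3 = 3`.
-/

theorem Odd.add_two_le_of_lt {m n : ℕ} (hm : Odd m) (hn : Odd n) (hnm : n < m) : n + 2 ≤ m := by
  obtain ⟨a, rfl⟩ := hm
  obtain ⟨b, rfl⟩ := hn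
  omega

theorem pow_add_pow_eq_of_div_eq {x y m n p : ℕ} (hm : Odd m) (hn : Odd n) (hp : p ≠ 0)
    (h1 : p = (x ^ m + y ^ m) / (x + y)) (h2 : p - 1 = 2 * ((x ^ n + y ^ n) / (x + y))) :
    x ^ m + y ^ m = 2 * (x ^ n + y ^ n) + (x + y) := by
  set q := (x ^ n + y ^ n) / (x + y)
  have hq : q * (x + y) = x ^ n + y ^ n := Nat.div_mul_cancel (hn.nat_add_dvd_pow_add_pow x y)
  calc x ^ m + y ^ m = p * (x + y) := by
        rw [h1, Nat.div_mul_cancel (hm.nat_add_dvd_pow_add_pow x y)]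
    _ = (2 * q + 1) * (x + y) := by rw [show p = 2 * q + 1 by omega]
    _ = 2 * (x ^ n + y ^ n) + (x + y) := by rw [← hq]; ring

theorem two_mul_pow_add_pow_add_lt {x y m n : ℕ} (hx : 3 ≤ x) (hyx : y ≤ x) (hn : 1 ≤ n)
    (hnm : n + 2 ≤ m) : 2 * (x ^ n + y ^ n) + (x + y) < x ^ m + y ^ m := by
  have hxm : 9 * x ^ n ≤ x ^ m :=
    calc 9 * x ^ n ≤ x ^ 2 * x ^ n := Nat.mul_le_mul_right _ (by nlinarith)
      _ = x ^ (n + 2) := by ring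
      _ ≤ x ^ m := Nat.pow_le_pow_right (by omega) hnm
  have hyn : y ^ n ≤ x ^ n := Nat.pow_le_pow_left hyx n
  have hxn : x ≤ x ^ n := Nat.le_self_pow (by omega) x
  omega

theorem eq_one_and_eq_three_of_two_pow_eq {m n : ℕ} (hn : 1 ≤ n) (hnm : n + 2 ≤ m)
    (h : 2 ^ m = 2 * 2 ^ n + 4) : n = 1 ∧ m = 3 := by
  have hm : 4 * 2 ^ n ≤ 2 ^ m :=
    calc 4 * 2 ^ n = 2 ^ (n + 2) := by ring
      _ ≤ 2 ^ m := Nat.pow_le_pow_right (by norm_num) hnm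
  have hn1 : n = 1 := by
    have : 2 ^ n < 2 ^ 2 := by omega
    have := (Nat.pow_lt_pow_iff_right (by norm_num)).mp this
    omega
  subst hn1
  exact ⟨rfl, Nat.pow_right_injective le_rfl (by simpa using h)⟩

theorem stmt_8_general (x y m n p : ℕ) (hy : 1 ≤ y) (hxy : y < x)
    (hmn : n < m) (hmodd : Odd m) (hnodd : Odd n)
    (hp : p.Prime)
    (h1 : p = (x ^ m + y ^ m) / (x + y))
    (h2 : p - 1 = 2 * ((x ^ n + y ^ n) / (x + y))) :
    x = 2 ∧ y = 1 ∧ m = 3 ∧ n = 1 ∧ p = 3 := by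
  have key := pow_add_pow_eq_of_div_eq hmodd hnodd hp.ne_zero h1 h2
  have hnm := hmodd.add_two_le_of_lt hnodd hmn
  have hx : x = 2 := by
    by_contra hx
    have := two_mul_pow_add_pow_add_lt (by omega) hxy.le hnodd.pos hnm
    omega
  obtain rfl : y = 1 := by omega
  subst hx
  simp only [one_pow] at key h1
  obtain ⟨rfl, rfl⟩ := eq_one_and_eq_three_of_two_pow_eq hnodd.pos hnm (by omega)
  norm_num at h1
  exact ⟨rfl, rfl, rfl, rfl, h1⟩

/-- The only solution in coprime integers `x > y ≥ 1`, odd `m > n ≥ 1`, `p` prime, of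
`p = (x^m + y^m)/(x+y)` and `p - 1 = 2*(x^n + y^n)/(x+y)` is
`x = 2, y = 1, m = 3, n = 1, p = 3`; in particular there is no such solution with
`y ≥ 2`. -/
theorem stmt_8 (x y m n p : ℕ) (hy : 1 ≤ y) (hxy : y < x) (hcop : Nat.Coprime x y)
    (hn : 1 ≤ n) (hmn : n < m) (hmodd : Odd m) (hnodd : Odd n)
    (hp : p.Prime)
    (h1 : p = (x ^ m + y ^ m) / (x + y))
    (h2 : p - 1 = 2 * ((x ^ n + y ^ n) / (x + y))) :
    x = 2 ∧ y = 1 ∧ m = 3 ∧ n = 1 ∧ p = 3 :=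
  stmt_8_general x y m n p hy hxy hmn hmodd hnodd hp h1 h2
end

section
/- If x - y = 1 with x > y ≥ 1, m even, n odd, and p = (x^m - y^m)/(x + y) is prime with p - 1 = 2*(x^n + y^n)/(x + y), then 4 divides p - 1, contradicting 2 || p - 1; hence no such solution exists with (x^m - y^m)/(x^2 - y^2) > 1. Consequently the only solutions of the system p = (x^m - y^m)/(x+y) prime, p - 1 = 2*(x^n + y^n)/(x+y), m even > n odd ≥ 1, gcd(m,n)=1, x > y ≥ 1 coprime, have m = 2, n = 1, p = x - y = 3. -/
lemma pow_mod_two (a j : ℕ) (hj : j ≠ 0) : a ^ j % 2 = a % 2 := by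
  rcases Nat.even_or_odd a with h | h
  · obtain ⟨c, rfl⟩ := h
    have h2 : (2 : ℕ) ∣ (c + c) ^ j := Dvd.dvd.pow ⟨c, by ring⟩ hj
    omega
  · obtain ⟨c, rfl⟩ := h
    have h2 : Odd ((2 * c + 1) ^ j) := Odd.pow ⟨c, by ring⟩
    obtain ⟨d, hd⟩ := h2
    omega

lemma odd_sq_mod4 {a : ℕ} (h : Odd a) : a ^ 2 % 4 = 1 := by
  obtain ⟨c, rfl⟩ := h
  have : (2 * c + 1) ^ 2 = 4 * (c * c) + 4 * c + 1 := by ring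
  omega

lemma even_sq_mod4 {a : ℕ} (h : Even a) : a ^ 2 % 4 = 0 := by
  obtain ⟨c, rfl⟩ := h
  have : (c + c) ^ 2 = 4 * (c * c) := by ring
  omega

/-- The only solutions of `p = (x^m - y^m)/(x+y)` prime, `p - 1 = 2*(x^n + y^n)/(x+y)`,
with `m` even, `n` odd, `m > n ≥ 1`, `gcd(m,n) = 1`, `x > y ≥ 1` coprime, have
`m = 2`, `n = 1`, `p = x - y = 3`. -/
theorem stmt_9 (x y m n p : ℕ) (hy : 1 ≤ y) (hxy : y < x) (hcop : Nat.Coprime x y)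
    (hn : 1 ≤ n) (hmn : n < m) (hmeven : Even m) (hnodd : Odd n)
    (hgcd : Nat.gcd m n = 1) (hp : p.Prime) (hpodd : Odd p)
    (h1 : p = (x ^ m - y ^ m) / (x + y))
    (h2 : p - 1 = 2 * ((x ^ n + y ^ n) / (x + y))) :
    m = 2 ∧ n = 1 ∧ p = 3 ∧ x - y = 3 := by
  obtain ⟨k, hk⟩ := hmeven
  have hm1 : 1 ≤ m := le_of_lt (lt_of_le_of_lt hn hmn)
  have hk1 : 1 ≤ k := by omega
  have hxpos : 1 ≤ x := le_of_lt (lt_of_le_of_lt hy hxy)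
  have hspos : 0 < x + y := by omega
  -- x^2 - y^2 divides x^m - y^m
  have hdvd2 : (x ^ 2 - y ^ 2) ∣ (x ^ m - y ^ m) := by
    have := Nat.sub_dvd_pow_sub_pow (x ^ 2) (y ^ 2) k
    rwa [← pow_mul, ← pow_mul, show 2 * k = m by omega] at this
  obtain ⟨C, hC⟩ := hdvd2
  -- basic inequalities
  have hxym : y ^ m < x ^ m := Nat.pow_lt_pow_left hxy (by omega)
  have hxy2 : y ^ 2 < x ^ 2 := Nat.pow_lt_pow_left hxy (by omega)
  have hsq : x ^ 2 - y ^ 2 = (x + y) * (x - y) := Nat.sq_sub_sq x y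
  -- x + y divides x^m - y^m
  have hdvds : (x + y) ∣ (x ^ m - y ^ m) := ⟨(x - y) * C, by rw [hC, hsq]; ring⟩
  have hpe : p * (x + y) = x ^ m - y ^ m := by
    rw [h1, Nat.div_mul_cancel hdvds]
  -- x + y divides x^n + y^n
  have hdvdn : (x + y) ∣ (x ^ n + y ^ n) := Odd.nat_add_dvd_pow_add_pow x y hnodd
  set r := (x ^ n + y ^ n) / (x + y) with hr
  have hre : r * (x + y) = x ^ n + y ^ n := Nat.div_mul_cancel hdvdn
  -- p = (x - y) * C
  have hpfac : p = (x - y) * C := by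
    have h : (x + y) * p = (x + y) * ((x - y) * C) := by
      rw [mul_comm (x + y) p, hpe, hC, hsq]; ring
    exact Nat.eq_of_mul_eq_mul_left hspos h
  have hCdvd : (x - y) ∣ p := ⟨C, hpfac⟩
  rcases (Nat.Prime.eq_one_or_self_of_dvd hp _ hCdvd) with hd1 | hdp
  · -- x - y = 1 : contradiction via mod 4
    exfalso
    have hx : x = y + 1 := by omega
    -- x^n + y^n is odd
    have hparity : (x ^ n + y ^ n) % 2 = 1 := by
      have h1 : x ^ n % 2 = x % 2 := pow_mod_two x n (by omega)
      have h2 : y ^ n % 2 = y % 2 := pow_mod_two y n (by omega)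
      omega
    -- r is odd
    have hrodd : r % 2 = 1 := by
      rcases Nat.mod_two_eq_zero_or_one r with h | h
      · exfalso
        have : (x ^ n + y ^ n) % 2 = 0 := by
          rw [← hre, Nat.mul_mod, h]; simp
        omega
      · exact h
    -- p % 4 = 3
    have hp2 : 2 ≤ p := hp.two_le
    have hp4 : p % 4 = 3 := by
      obtain ⟨t, ht⟩ := hpodd
      omega
    -- main equation
    have heqn : p * (x + y) + y ^ m = x ^ m := by omega
    -- powers as squares
    have hxm : x ^ m = (x ^ k) ^ 2 := by rw [← pow_mul]; congr 1; omega
    have hym : y ^ m = (y ^ k) ^ 2 := by rw [← pow_mul]; congr 1; omega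
    have hxkp : x ^ k % 2 = x % 2 := pow_mod_two x k (by omega)
    have hykp : y ^ k % 2 = y % 2 := pow_mod_two y k (by omega)
    rcases Nat.mod_two_eq_zero_or_one y with hye | hyo
    · -- y even, x odd, x + y ≡ 1 mod 4
      have hxm4 : x ^ m % 4 = 1 := by
        rw [hxm]; exact odd_sq_mod4 (Nat.odd_iff.mpr (by omega))
      have hym4 : y ^ m % 4 = 0 := by
        rw [hym]; exact even_sq_mod4 (Nat.even_iff.mpr (by omega))
      have hs4 : (x + y) % 4 = 1 := by omega
      have hmul : p * (x + y) % 4 = 3 := by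
        rw [Nat.mul_mod, hp4, hs4]
      omega
    · -- y odd, x even, x + y ≡ 3 mod 4
      have hxm4 : x ^ m % 4 = 0 := by
        rw [hxm]; exact even_sq_mod4 (Nat.even_iff.mpr (by omega))
      have hym4 : y ^ m % 4 = 1 := by
        rw [hym]; exact odd_sq_mod4 (Nat.odd_iff.mpr (by omega))
      have hs4 : (x + y) % 4 = 3 := by omega
      have hmul : p * (x + y) % 4 = 1 := by
        rw [Nat.mul_mod, hp4, hs4]
      omega
  · -- x - y = p, so C = 1, so m = 2
    have hC1 : C = 1 := by
      have hpc : p * C = p * 1 := by rw [mul_one]; nth_rewrite 1 [← hdp]; omega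
      exact Nat.eq_of_mul_eq_mul_left hp.pos hpc
    have hmm : x ^ m - y ^ m = x ^ 2 - y ^ 2 := by rw [hC, hC1, mul_one]
    have hm2 : m = 2 := by
      by_contra hne
      have hm4 : 4 ≤ m := by
        rcases Nat.lt_or_ge m 4 with h | h
        · interval_cases m <;> omega
        · exact h
      -- x^m + y^2 > x^2 + y^m
      have hkey : x ^ 2 + y ^ m < x ^ m + y ^ 2 := by
        have e1 : x ^ m = x ^ 2 * x ^ (m - 2) := by rw [← pow_add]; congr 1; omega
        have e2 : y ^ m = y ^ 2 * y ^ (m - 2) := by rw [← pow_add]; congr 1; omega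
        have h3 : y ^ (m - 2) < x ^ (m - 2) := Nat.pow_lt_pow_left hxy (by omega)
        have h4 : y ^ 2 * y ^ (m - 2) ≤ x ^ 2 * y ^ (m - 2) :=
          Nat.mul_le_mul_right _ (le_of_lt hxy2)
        have h5 : x ^ 2 * (y ^ (m - 2) + 1) ≤ x ^ 2 * x ^ (m - 2) :=
          Nat.mul_le_mul_left _ h3
        have hy2 : 1 ≤ y ^ 2 := Nat.one_le_pow _ _ (by omega)
        nlinarith
      omega
    have hn1 : n = 1 := by omega
    have hr1 : r = 1 := by rw [hr, hn1, pow_one, pow_one, Nat.div_self hspos]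
    have hps : p - 1 = 2 := by rw [h2, hr1]
    have hp3 : p = 3 := by have := hp.two_le; omega
    exact ⟨hm2, hn1, hp3, by omega⟩
end

section
/- The only solutions of the system: p = (x^m + y^m)/(x + y) is prime and p - 1 = 2*(x^n - y^n)/(x + y), where x > y ≥ 1 are coprime integers, m odd, n even, m > n ≥ 2, gcd(m, n) = 1, are x = 2, y = 1, n = m - 1, with m prime and (2^m + 1)/3 prime. -/
/-- The only solutions of `p = (x^m + y^m)/(x+y)` prime, `p - 1 = 2*(x^n - y^n)/(x+y)`,
with `x > y ≥ 1` coprime, `m` odd, `n` even, `m > n ≥ 2`, `gcd(m,n) = 1`, are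
`x = 2, y = 1, n = m - 1` with `m` prime and `(2^m + 1)/3` prime. -/
theorem stmt_10 (x y m n p : ℕ) (hy : 1 ≤ y) (hxy : y < x) (hcop : Nat.Coprime x y)
    (hn : 2 ≤ n) (hmn : n < m) (hmodd : Odd m) (hneven : Even n)
    (hgcd : Nat.gcd m n = 1) (hp : p.Prime)
    (h1 : p = (x ^ m + y ^ m) / (x + y))
    (h2 : p - 1 = 2 * ((x ^ n - y ^ n) / (x + y))) :
    x = 2 ∧ y = 1 ∧ n = m - 1 ∧ m.Prime ∧ Nat.Prime ((2 ^ m + 1) / 3) := by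
  obtain ⟨k, hk⟩ := hneven
  have hk' : n = 2 * k := by omega
  -- divisibility facts
  have hdvd1 : x + y ∣ x ^ m + y ^ m := hmodd.nat_add_dvd_pow_add_pow x y
  have hdvd2 : x + y ∣ x ^ n - y ^ n := by
    have h1 : x + y ∣ x ^ 2 - y ^ 2 := by
      have : x ^ 2 - y ^ 2 = (x + y) * (x - y) := Nat.sq_sub_sq x y
      exact this ▸ Dvd.intro _ rfl
    have h2 : x ^ 2 - y ^ 2 ∣ (x ^ 2) ^ k - (y ^ 2) ^ k := Nat.sub_dvd_pow_sub_pow _ _ _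
    have h3 : (x ^ 2) ^ k = x ^ n := by rw [← pow_mul, hk']
    have h4 : (y ^ 2) ^ k = y ^ n := by rw [← pow_mul, hk']
    rw [h3, h4] at h2
    exact h1.trans h2
  have hxyle : y ^ n ≤ x ^ n := Nat.pow_le_pow_left hxy.le n
  have hxym : y ^ m ≤ x ^ m := Nat.pow_le_pow_left hxy.le m
  have hE1 : p * (x + y) = x ^ m + y ^ m := by
    rw [h1]; exact Nat.div_mul_cancel hdvd1
  have hE2 : (p - 1) * (x + y) = 2 * (x ^ n - y ^ n) := by
    rw [h2, mul_assoc]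
    congr 1
    exact Nat.div_mul_cancel hdvd2
  have hp1 : 1 ≤ p := hp.one_lt.le.trans' (by norm_num)
  -- key equation
  have hkey : x ^ m + y ^ m + 2 * y ^ n = x + y + 2 * x ^ n := by
    have h5 : (p - 1) * (x + y) + (x + y) = p * (x + y) := by
      have hp' : p - 1 + 1 = p := by omega
      conv_rhs => rw [← hp']
      ring
    rw [hE1, hE2] at h5
    omega
  -- show x = 2
  have hx2 : x = 2 := by
    by_contra hx
    have hx3 : 3 ≤ x := by omega
    obtain ⟨A, hA⟩ : ∃ A, x ^ m = A := ⟨_, rfl⟩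
    obtain ⟨B, hB⟩ : ∃ B, y ^ m = B := ⟨_, rfl⟩
    obtain ⟨C, hC⟩ : ∃ C, x ^ n = C := ⟨_, rfl⟩
    obtain ⟨D, hD⟩ : ∃ D, y ^ n = D := ⟨_, rfl⟩
    have hCxy : x + y < C := by
      calc x + y < 2 * x := by omega
        _ ≤ x * x := by nlinarith
        _ = x ^ 2 := (sq x).symm
        _ ≤ x ^ n := Nat.pow_le_pow_right (by omega) hn
        _ = C := hC
    have hAC : 3 * C ≤ A := by
      calc 3 * C ≤ x * C := Nat.mul_le_mul_right C hx3
        _ = x ^ (n + 1) := by rw [← hC, ← pow_succ']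
        _ ≤ x ^ m := Nat.pow_le_pow_right (by omega) (by omega)
        _ = A := hA
    have hB1 : 1 ≤ B := by rw [← hB]; exact Nat.one_le_pow _ _ (by omega)
    have hD1 : 1 ≤ D := by rw [← hD]; exact Nat.one_le_pow _ _ (by omega)
    rw [hA, hB, hC, hD] at hkey
    omega
  have hy1 : y = 1 := by omega
  subst hx2; subst hy1
  simp only [one_pow] at hkey h1
  -- 2^m = 2^(n+1), so m = n+1
  have hpow : 2 ^ m = 2 ^ (n + 1) := by
    have : 2 ^ (n + 1) = 2 * 2 ^ n := by rw [pow_succ']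
    omega
  have hmn1 : m = n + 1 := Nat.pow_right_injective (le_refl 2) hpow
  have hnm : n = m - 1 := by omega
  -- p = (2^m + 1)/3 and 3 * p = 2^m + 1
  have hm3 : 3 ≤ m := by omega
  have h3dvd : ∀ d : ℕ, Odd d → 3 ∣ 2 ^ d + 1 := by
    intro d hd
    have : (3 : ℤ) ∣ 2 ^ d + 1 := by
      have h := Int.ModEq.pow d (show (2 : ℤ) ≡ -1 [ZMOD 3] by decide)
      rw [hd.neg_one_pow] at h
      have h2 := h.dvd
      omega
    exact_mod_cast this
  have h3p : 3 * p = 2 ^ m + 1 := by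
    rw [h1]
    show 3 * ((2 ^ m + 1) / (2 + 1)) = 2 ^ m + 1
    exact Nat.mul_div_cancel' (h3dvd m hmodd)
  -- m is prime
  have hmprime : Nat.Prime m := by
    by_contra hnp
    obtain ⟨d, hdm, hd2, hdlt⟩ := Nat.exists_dvd_of_not_prime2 (by omega) hnp
    have hdodd : Odd d := hmodd.of_dvd_nat hdm
    obtain ⟨e, he⟩ := hdm
    have heodd : Odd e := by
      rcases Nat.even_or_odd e with h | h
      · exfalso; exact (Nat.not_even_iff_odd.mpr hmodd) (he ▸ h.mul_left d)
      · exact h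
    have hddvd : 2 ^ d + 1 ∣ 2 ^ m + 1 := by
      have := heodd.nat_add_dvd_pow_add_pow (2 ^ d) 1
      simpa [← pow_mul, ← he] using this
    rw [← h3p] at hddvd
    obtain ⟨t, ht⟩ := h3dvd d hdodd
    have htp : t ∣ p := by
      have : 3 * t ∣ 3 * p := ht ▸ hddvd
      exact (mul_dvd_mul_iff_left (by norm_num : (3:ℕ) ≠ 0)).mp this
    rcases (Nat.Prime.eq_one_or_self_of_dvd hp t htp) with h | h
    · subst h
      have : 2 ^ d = 2 := by omega
      have : d = 1 := Nat.pow_right_injective (le_refl 2) (by simpa using this)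
      omega
    · subst h
      have hpow2 : 2 ^ d = 2 ^ m := by omega
      have : d = m := Nat.pow_right_injective (le_refl 2) hpow2
      omega
  refine ⟨rfl, rfl, hnm, hmprime, ?_⟩
  rwa [h1] at hp
end

section
/- Let x > y ≥ 2 be integers, m odd, n even, m > n ≥ 2. If p = (x^m + y^m)/(x + y) and p - 1 = 2*(x^n - y^n)/(x + y), then we reach a contradiction: x^m + y^m - x - y ≥ 3x^n + 2y^n - x - y > 2x^n - 2y^n, so no solution with y ≥ 2 exists. -/
/-!
Clearing the (floor) divisions by `x + y` in the two equations gives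
`x^m + y^m < 2 (x^n - y^n) + 2 (x + y)`. But `x ≥ 3` and `m ≥ n + 1` give
`x^m ≥ 3 x^n ≥ 2 x^n + 2x` and `y^m ≥ 2y`, so `x^m + y^m ≥ 2 x^n + 2 (x + y)`.
-/

theorem Nat.lt_add_two_mul_of_div_sub_one_le {a b c : ℕ} (hc : 0 < c)
    (h : a / c - 1 ≤ b / c) : a < b + 2 * c :=
  calc a < c * (a / c + 1) := Nat.lt_mul_div_succ a hc
    _ ≤ c * (b / c + 2) := Nat.mul_le_mul_left c (by omega)
    _ = c * (b / c) + 2 * c := by ring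
    _ ≤ b + 2 * c := Nat.add_le_add_right (Nat.mul_div_le b c) _

theorem Nat.two_mul_pow_add_two_mul_add_le_pow_add_pow {x y m n : ℕ} (hx : 3 ≤ x) (hy : 2 ≤ y)
    (hn : 2 ≤ n) (hnm : n < m) : 2 * x ^ n + 2 * (x + y) ≤ x ^ m + y ^ m := by
  have hx_le : 3 * x ≤ x ^ n :=
    calc 3 * x ≤ x * x := Nat.mul_le_mul_right _ hx
      _ = x ^ 2 := (sq x).symm
      _ ≤ x ^ n := Nat.pow_le_pow_right (by omega) hn
  have hxm : 3 * x ^ n ≤ x ^ m :=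
    calc 3 * x ^ n ≤ x * x ^ n := Nat.mul_le_mul_right _ hx
      _ = x ^ (n + 1) := by ring
      _ ≤ x ^ m := Nat.pow_le_pow_right (by omega) hnm
  have hym : 2 * y ≤ y ^ m :=
    calc 2 * y ≤ y * y := Nat.mul_le_mul_right _ hy
      _ = y ^ 2 := (sq y).symm
      _ ≤ y ^ m := Nat.pow_le_pow_right (by omega) (by omega)
  omega

theorem stmt_11_general (x y m n p : ℕ) (hy : 2 ≤ y) (hxy : y < x)
    (hn : 2 ≤ n) (hmn : n < m)
    (h1 : p = (x ^ m + y ^ m) / (x + y))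
    (h2 : p - 1 = 2 * ((x ^ n - y ^ n) / (x + y))) :
    False := by
  have hdiv : (x ^ m + y ^ m) / (x + y) - 1 ≤ 2 * (x ^ n - y ^ n) / (x + y) := by
    rw [← h1, h2]
    exact Nat.mul_div_le_mul_div_assoc 2 _ _
  have hlt := Nat.lt_add_two_mul_of_div_sub_one_le (by omega) hdiv
  have hle := Nat.two_mul_pow_add_two_mul_add_le_pow_add_pow (x := x) (by omega) hy hn hmn
  omega

/-- There is no solution with `x > y ≥ 2`, `m` odd, `n` even, `m > n ≥ 2`, of
`p = (x^m + y^m)/(x+y)` together with `p - 1 = 2*(x^n - y^n)/(x+y)`. -/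
theorem stmt_11 (x y m n p : ℕ) (hy : 2 ≤ y) (hxy : y < x)
    (hn : 2 ≤ n) (hmn : n < m) (hmodd : Odd m) (hneven : Even n)
    (h1 : p = (x ^ m + y ^ m) / (x + y))
    (h2 : p - 1 = 2 * ((x ^ n - y ^ n) / (x + y))) :
    False :=
  stmt_11_general x y m n p hy hxy hn hmn h1 h2
end

section
/- For all positive integers a, b with a ≥ 78 and b ≥ 78, log(log(a*b)) ≤ log(log(a)) * log(log(b)). -/
open Real

/-- Lower bound on `log 78` via `log 2` bounds and `log x ≤ x - 1`. -/
lemma log78_lb : (4.3566 : ℝ) ≤ Real.log 78 := by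
  have h : Real.log ((2:ℝ)^44 / 78^7) ≤ (2:ℝ)^44 / 78^7 - 1 :=
    Real.log_le_sub_one_of_pos (by norm_num)
  rw [Real.log_div (by norm_num) (by norm_num), Real.log_pow, Real.log_pow] at h
  have l2 : (0.6931471803 : ℝ) < Real.log 2 := Real.log_two_gt_d9
  push_cast at h
  nlinarith [h, l2]

/-- Lower bound on `log (log 78)`. -/
lemma loglog78_lb : (1.4716 : ℝ) ≤ Real.log (Real.log 78) := by
  have h78 := log78_lb
  have hpos : (0:ℝ) < 4.3566 := by norm_num
  have hmono : Real.log (4.3566 : ℝ) ≤ Real.log (Real.log 78) :=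
    Real.log_le_log hpos h78
  refine le_trans ?_ hmono
  have h : Real.log ((2:ℝ)^17 / (4.3566:ℝ)^8) ≤ (2:ℝ)^17 / (4.3566:ℝ)^8 - 1 :=
    Real.log_le_sub_one_of_pos (by norm_num)
  rw [Real.log_div (by norm_num) (by positivity), Real.log_pow, Real.log_pow] at h
  have l2 : (0.6931471803 : ℝ) < Real.log 2 := Real.log_two_gt_d9
  push_cast at h
  nlinarith [h, l2]

/-- For all reals `a, b ≥ 78`, `log(log(a*b)) ≤ log(log a) * log(log b)`. -/
theorem stmt_13 (a b : ℝ) (ha : 78 ≤ a) (hb : 78 ≤ b) :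
    Real.log (Real.log (a * b)) ≤ Real.log (Real.log a) * Real.log (Real.log b) := by
  have hL : (4.3566 : ℝ) ≤ Real.log 78 := log78_lb
  have hc : (1.4716 : ℝ) ≤ Real.log (Real.log 78) := loglog78_lb
  have hLpos : (0:ℝ) < Real.log 78 := by linarith
  set L := Real.log 78 with hLdef
  set c := Real.log L with hcdef
  have hsa : L ≤ Real.log a := Real.log_le_log (by norm_num) ha
  have hsb : L ≤ Real.log b := Real.log_le_log (by norm_num) hb
  set s := Real.log a with hs
  set t := Real.log b with ht
  have hspos : (0:ℝ) < s := lt_of_lt_of_le hLpos hsa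
  have htpos : (0:ℝ) < t := lt_of_lt_of_le hLpos hsb
  have hu : c ≤ Real.log s := Real.log_le_log hLpos hsa
  have hv : c ≤ Real.log t := Real.log_le_log hLpos hsb
  set u := Real.log s with husdef
  set v := Real.log t with hvsdef
  -- log (a*b) = s + t
  have hab : Real.log (a * b) = s + t :=
    Real.log_mul (by positivity) (by positivity)
  rw [hab]
  -- s + t ≤ 2*s*t/L
  have key : s + t ≤ 2 * s * t / L := by
    rw [le_div_iff₀ hLpos]
    nlinarith [mul_le_mul_of_nonneg_left hsb hspos.le,
      mul_le_mul_of_nonneg_left hsa htpos.le]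
  have hst : (0:ℝ) < s + t := by linarith
  have step : Real.log (s + t) ≤ Real.log (2 * s * t / L) :=
    Real.log_le_log hst key
  have expand : Real.log (2 * s * t / L) = Real.log 2 + u + v - c := by
    rw [Real.log_div (by positivity) (ne_of_gt hLpos),
        Real.log_mul (by positivity) (ne_of_gt htpos),
        Real.log_mul (by norm_num) (ne_of_gt hspos)]
  rw [expand] at step
  have l2 : Real.log 2 < 0.6931471808 := Real.log_two_lt_d9
  -- final: log 2 + u + v - c ≤ u * v
  refine le_trans step ?_
  nlinarith [mul_nonneg (sub_nonneg.2 hu) (sub_nonneg.2 hv), hu, hv, hc, l2]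
end

section
/- If z is a positive integer with φ(3z) = z, then z = 2^β * 3^s for some integers β ≥ 1 and s ≥ 0. Conversely, every z of this form satisfies φ(3z) = z. -/
lemma aux_two (m : ℕ) (hm : 0 < m) (h : 2 * m.totient = m) :
    ∃ a : ℕ, 1 ≤ a ∧ m = 2 ^ a := by
  have h2 : (2 : ℕ).Prime := Nat.prime_two
  have hdvd : 2 ∣ m := ⟨m.totient, h.symm⟩
  set a := m.factorization 2 with ha
  set k := m / 2 ^ a with hk
  have hmk : 2 ^ a * k = m := Nat.ordProj_mul_ordCompl_eq_self m 2
  have hk0 : 0 < k := Nat.ordCompl_pos 2 hm.ne'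
  have hndvd : ¬ 2 ∣ k := Nat.not_dvd_ordCompl h2 hm.ne'
  have ha1 : 1 ≤ a := (Nat.Prime.factorization_pos_of_dvd h2 hm.ne' hdvd)
  have hcop : Nat.Coprime (2 ^ a) k :=
    Nat.Coprime.pow_left _ ((Nat.Prime.coprime_iff_not_dvd h2).mpr hndvd)
  have htot : m.totient = (2 ^ a).totient * k.totient := by
    rw [← hmk, Nat.totient_mul hcop]
  have htp : (2 ^ a).totient = 2 ^ (a - 1) := by
    rw [Nat.totient_prime_pow h2 ha1]; simp
  have hpow : 2 * 2 ^ (a - 1) = 2 ^ a := by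
    rw [← pow_succ']; congr 1; omega
  have key : 2 ^ a * k.totient = 2 ^ a * k := by
    rw [htot, htp] at h
    rw [← hmk] at h
    calc 2 ^ a * k.totient = 2 * (2 ^ (a - 1) * k.totient) := by rw [← hpow]; ring
      _ = 2 ^ a * k := h
  have hkk : k.totient = k := Nat.eq_of_mul_eq_mul_left (by positivity) key
  have hk1 : k = 1 := by
    by_contra hne
    have : 1 < k := by omega
    exact absurd hkk (Nat.totient_lt k this).ne
  exact ⟨a, ha1, by rw [← hmk, hk1, mul_one]⟩

/-- For a positive integer `z`, `φ(3z) = z` iff `z = 2^β * 3^s` with `β ≥ 1, s ≥ 0`. -/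
theorem stmt_14 (z : ℕ) (hz : 0 < z) :
    Nat.totient (3 * z) = z ↔ ∃ β s : ℕ, 1 ≤ β ∧ z = 2 ^ β * 3 ^ s := by
  have h3 : (3 : ℕ).Prime := Nat.prime_three
  constructor
  · intro h
    set s := z.factorization 3 with hs
    set m := z / 3 ^ s with hm
    have hzm : 3 ^ s * m = z := Nat.ordProj_mul_ordCompl_eq_self z 3
    have hm0 : 0 < m := Nat.ordCompl_pos 3 hz.ne'
    have hndvd : ¬ 3 ∣ m := Nat.not_dvd_ordCompl h3 hz.ne'
    have hcop : Nat.Coprime (3 ^ (s + 1)) m :=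
      Nat.Coprime.pow_left _ ((Nat.Prime.coprime_iff_not_dvd h3).mpr hndvd)
    have h3z : 3 * z = 3 ^ (s + 1) * m := by rw [← hzm]; ring
    have htot : (3 * z).totient = 2 * 3 ^ s * m.totient := by
      rw [h3z, Nat.totient_mul hcop, Nat.totient_prime_pow h3 (Nat.succ_pos s)]
      simp [mul_comm]
    rw [htot, ← hzm] at h
    have h2m : 2 * m.totient = m := by
      have : 3 ^ s * (2 * m.totient) = 3 ^ s * m := by ring_nf; ring_nf at h; omega
      exact Nat.eq_of_mul_eq_mul_left (by positivity) this
    obtain ⟨a, ha1, hma⟩ := aux_two m hm0 h2m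
    exact ⟨a, s, ha1, by rw [← hzm, hma]; ring⟩
  · rintro ⟨β, s, hβ, rfl⟩
    have hcop : Nat.Coprime (2 ^ β) (3 ^ (s + 1)) :=
      Nat.Coprime.pow _ _ (by norm_num)
    have : 3 * (2 ^ β * 3 ^ s) = 2 ^ β * 3 ^ (s + 1) := by ring
    rw [this, Nat.totient_mul hcop, Nat.totient_prime_pow Nat.prime_two hβ,
      Nat.totient_prime_pow h3 (Nat.succ_pos s)]
    have : 2 ^ (β - 1) * (2 - 1) * 2 = 2 ^ β := by
      simp; rw [← pow_succ]; congr 1; omega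
    calc 2 ^ (β-1) * (2-1) * (3 ^ (s+1-1) * (3-1)) = (2^(β-1)*(2-1)*2) * 3^s := by
          simp; ring
      _ = 2 ^ β * 3 ^ s := by rw [this]
end

section
/- Let p be an odd prime and z a positive integer such that φ(p*z) = ((p-1)/2) * z. Then z = 2^β * p^s for some integers β ≥ 1 and s ≥ 0, and conversely every such z satisfies the equation. -/
/-!
Write `z = p ^ s * m` with `p ∤ m`. Then `φ (p * z) = p ^ s * (p - 1) * φ m`, so after cancelling
`p ^ s * (p - 1) / 2` the equation becomes `2 * φ m = m`. Splitting off the power of two,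
`m = 2 ^ k * t` with `t` odd, this forces `k ≥ 1` and then `φ t = t`, i.e. `t = 1`.
-/

namespace Nat

theorem totient_prime_pow_succ_mul {p m : ℕ} (hp : p.Prime) (hm : ¬p ∣ m) (s : ℕ) :
    φ (p ^ (s + 1) * m) = p ^ s * (p - 1) * φ m := by
  rw [totient_mul (((hp.coprime_iff_not_dvd).2 hm).pow_left _), totient_prime_pow_succ hp]

theorem two_mul_totient_eq_self_iff {m : ℕ} (hm : m ≠ 0) :
    2 * φ m = m ↔ ∃ β, 1 ≤ β ∧ m = 2 ^ β := by
  constructor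
  · obtain ⟨k, t, ht, rfl⟩ := exists_eq_pow_mul_and_not_dvd hm 2 (by norm_num)
    intro h
    obtain _ | j := k
    · exact absurd ⟨φ t, by simpa using h.symm⟩ ht
    have htot : φ t = t := by
      rw [totient_prime_pow_succ_mul prime_two ht, pow_succ] at h
      have : 2 ^ j * (2 * φ t) = 2 ^ j * (2 * t) := by linarith
      simpa using this
    have ht1 : t = 1 := by
      by_contra hne
      have : 1 < t := by grind
      exact (totient_lt t this).ne htot
    exact ⟨j + 1, by omega, by rw [ht1, mul_one]⟩
  · rintro ⟨β, hβ, rfl⟩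
    obtain ⟨j, rfl⟩ : ∃ j, β = j + 1 := ⟨β - 1, by omega⟩
    rw [totient_prime_pow_succ prime_two]
    ring

theorem totient_prime_mul_eq_half_iff {p m : ℕ} (hp : p.Prime) (hpodd : Odd p) (hm : ¬p ∣ m)
    (s : ℕ) : φ (p * (p ^ s * m)) = (p - 1) / 2 * (p ^ s * m) ↔ 2 * φ m = m := by
  obtain ⟨c, rfl⟩ := hpodd
  have hc : 0 < c * (2 * c + 1) ^ s := Nat.mul_pos (by have := hp.two_le; omega) (by positivity)
  rw [← mul_assoc, ← pow_succ', totient_prime_pow_succ_mul hp hm,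
    show (2 * c + 1 - 1) / 2 = c by omega, show 2 * c + 1 - 1 = 2 * c by omega,
    show (2 * c + 1) ^ s * (2 * c) * φ m = c * (2 * c + 1) ^ s * (2 * φ m) by ring,
    show c * ((2 * c + 1) ^ s * m) = c * (2 * c + 1) ^ s * m by ring, Nat.mul_left_cancel_iff hc]

end Nat

/-- For an odd prime `p` and positive integer `z`, `φ(p*z) = ((p-1)/2) * z` iff
`z = 2^β * p^s` with `β ≥ 1, s ≥ 0`. -/
theorem stmt_16 (p z : ℕ) (hp : p.Prime) (hpodd : Odd p) (hz : 0 < z) :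
    Nat.totient (p * z) = ((p - 1) / 2) * z ↔
      ∃ β s : ℕ, 1 ≤ β ∧ z = 2 ^ β * p ^ s := by
  constructor
  · obtain ⟨s, m, hpm, rfl⟩ := Nat.exists_eq_pow_mul_and_not_dvd hz.ne' p hp.ne_one
    intro h
    have hm : m ≠ 0 := by rintro rfl; simp at hz
    obtain ⟨β, hβ, rfl⟩ :=
      (Nat.two_mul_totient_eq_self_iff hm).1 ((Nat.totient_prime_mul_eq_half_iff hp hpodd hpm s).1 h)
    exact ⟨β, s, hβ, mul_comm _ _⟩
  · rintro ⟨β, s, hβ, rfl⟩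
    have hp2 : ¬p ∣ 2 ^ β := hp.coprime_iff_not_dvd.1 ((Nat.coprime_two_right.2 hpodd).pow_right β)
    rw [mul_comm (2 ^ β), Nat.totient_prime_mul_eq_half_iff hp hpodd hp2 s,
      Nat.two_mul_totient_eq_self_iff (by positivity)]
    exact ⟨β, hβ, rfl⟩
end
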